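/- arXiv:2312.07847 — 4 statements merged into one kernel-verified Lean document; each statement's English description precedes it below -/
import Mathlib

section
/- Every middle-exact bipersistence module is weakly-exact: if for every square a ≤ a', b ≤ b' the sequence M_{(a,b)} → M_{(a,b')} ⊕ M_{(a',b)} → M_{(a',b')} (with maps (g,f) and f − g) is exact at the middle term, then Im(M_{(a,b)} → M_{(a',b')}) = Im(M_{(a,b')} → M_{(a',b')}) ∩ Im(M_{(a',b)} → M_{(a',b')}) and Ker(M_{(a,b)} → M_{(a',b')}) = Ker(M_{(a,b)} → M_{(a,b')}) + Ker(M_{(a,b)} → M_{(a',b)}). -/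
/-- A `P`-indexed persistence module over a field `K`. -/
structure PersMod (P : Type*) [Preorder P] (K : Type*) [Field K] where
  V : P → Type*
  acg : ∀ p, AddCommGroup (V p)
  mod : ∀ p, Module K (V p)
  map : ∀ {p q : P}, p ≤ q → (V p →ₗ[K] V q)
  map_id : ∀ p : P, map (le_refl p) = LinearMap.id
  map_comp : ∀ {p q r : P} (hpq : p ≤ q) (hqr : q ≤ r),
    map (hpq.trans hqr) = (map hqr).comp (map hpq)

attribute [instance] PersMod.acg PersMod.mod

/-- Every middle-exact bipersistence module is weakly-exact: if for every square
`a ≤ a'`, `b ≤ b'` the sequence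
`M₍a,b₎ → M₍a,b'₎ ⊕ M₍a',b₎ → M₍a',b'₎` is exact at the middle term, then
`Im(M₍a,b₎ → M₍a',b'₎) = Im(M₍a,b'₎ → M₍a',b'₎) ⊓ Im(M₍a',b₎ → M₍a',b'₎)` and
`Ker(M₍a,b₎ → M₍a',b'₎) = Ker(M₍a,b₎ → M₍a,b'₎) ⊔ Ker(M₍a,b₎ → M₍a',b₎)`. -/
theorem weaklyExact_of_middleExact {T₁ T₂ K : Type*}
    [LinearOrder T₁] [LinearOrder T₂] [Field K]
    (M : PersMod (T₁ × T₂) K)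
    (hmid : ∀ (a a' : T₁) (b b' : T₂) (ha : a ≤ a') (hb : b ≤ b'),
      ∀ (x : M.V (a, b')) (y : M.V (a', b)),
        M.map (Prod.mk_le_mk.mpr ⟨ha, le_refl b'⟩) x
          = M.map (Prod.mk_le_mk.mpr ⟨le_refl a', hb⟩) y →
        ∃ w : M.V (a, b),
          M.map (Prod.mk_le_mk.mpr ⟨le_refl a, hb⟩) w = x ∧
          M.map (Prod.mk_le_mk.mpr ⟨ha, le_refl b⟩) w = y) :
    ∀ (a a' : T₁) (b b' : T₂) (ha : a ≤ a') (hb : b ≤ b'),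
      (LinearMap.range (M.map (Prod.mk_le_mk.mpr ⟨ha, hb⟩ : (a, b) ≤ (a', b')))
        = LinearMap.range (M.map (Prod.mk_le_mk.mpr ⟨ha, le_refl b'⟩ : (a, b') ≤ (a', b')))
          ⊓ LinearMap.range (M.map (Prod.mk_le_mk.mpr ⟨le_refl a', hb⟩ : (a', b) ≤ (a', b'))))
      ∧
      (LinearMap.ker (M.map (Prod.mk_le_mk.mpr ⟨ha, hb⟩ : (a, b) ≤ (a', b')))
        = LinearMap.ker (M.map (Prod.mk_le_mk.mpr ⟨le_refl a, hb⟩ : (a, b) ≤ (a, b')))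
          ⊔ LinearMap.ker (M.map (Prod.mk_le_mk.mpr ⟨ha, le_refl b⟩ : (a, b) ≤ (a', b)))) := by
  have key : ∀ {p q r : T₁ × T₂} (h1 : p ≤ q) (h2 : q ≤ r) (h : p ≤ r) (x : M.V p),
      M.map h x = M.map h2 (M.map h1 x) := by
    intro p q r h1 h2 h x
    rw [show M.map h = (M.map h2).comp (M.map h1) from M.map_comp h1 h2]
    rfl
  intro a a' b b' ha hb
  set hV : (a, b) ≤ (a, b') := Prod.mk_le_mk.mpr ⟨le_refl a, hb⟩
  set hH : (a, b) ≤ (a', b) := Prod.mk_le_mk.mpr ⟨ha, le_refl b⟩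
  set hV' : (a', b) ≤ (a', b') := Prod.mk_le_mk.mpr ⟨le_refl a', hb⟩
  set hH' : (a, b') ≤ (a', b') := Prod.mk_le_mk.mpr ⟨ha, le_refl b'⟩
  set hD : (a, b) ≤ (a', b') := Prod.mk_le_mk.mpr ⟨ha, hb⟩
  constructor
  · apply le_antisymm
    · rintro z ⟨v, rfl⟩
      exact ⟨⟨M.map hV v, (key hV hH' hD v).symm⟩,
             ⟨M.map hH v, (key hH hV' hD v).symm⟩⟩
    · rintro z ⟨⟨x, hx⟩, ⟨y, hy⟩⟩
      obtain ⟨w, hw1, hw2⟩ := hmid a a' b b' ha hb x y (hx.trans hy.symm)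
      exact ⟨w, by rw [key hV hH' hD w, hw1, hx]⟩
  · apply le_antisymm
    · intro v hv
      have hv' : M.map hD v = 0 := hv
      have h0 : M.map hH' (M.map hV v) = M.map hV' (0 : M.V (a', b)) := by
        rw [map_zero, ← key hV hH' hD v, hv']
      obtain ⟨w, hw1, hw2⟩ := hmid a a' b b' ha hb (M.map hV v) 0 h0
      have hvw : v - w ∈ LinearMap.ker (M.map hV) := by
        simpa [map_sub, hw1] using sub_self (M.map hV v)
      have hw : w ∈ LinearMap.ker (M.map hH) := hw2
      have : v = (v - w) + w := by abel
      rw [this]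
      exact Submodule.add_mem_sup hvw hw
    · apply sup_le
      · intro v hv
        have : M.map hV v = 0 := hv
        show M.map hD v = 0
        rw [key hV hH' hD v, this, map_zero]
      · intro v hv
        have : M.map hH v = 0 := hv
        show M.map hD v = 0
        rw [key hH hV' hD v, this, map_zero]
end

section
/- Let 0 → A_* → B_* → C_* → 0 and 0 → A_* → B'_* → C'_* → 0 be short exact sequences of chain complexes fitting into a commutative diagram with identity on A_* and chain maps B_* → B'_*, C_* → C'_*. Then in the induced commutative ladder of long exact sequences in homology, for each degree k: Im(H_k(B) → H_k(C')) = Im(H_k(B') → H_k(C')) ∩ Im(H_k(C) → H_k(C')), where the map H_k(B) → H_k(C') is the composite through either side of the square. -/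
open CategoryTheory HomologicalComplex

/-- Given a commutative ladder of short exact sequences of chain complexes over a field
`0 → A → B → C → 0` and `0 → A → B' → C' → 0` (with identity on `A`), in the induced
ladder of long exact sequences in homology one has, for each degree `k`:
`Im(H_k(B) → H_k(C')) = Im(H_k(B') → H_k(C')) ∩ Im(H_k(C) → H_k(C'))`,
where `H_k(B) → H_k(C')` is the composite through either side of the square. -/
theorem homology_ladder_image_inter {F : Type} [Field F]
    (A B B' C C' : ChainComplex (ModuleCat F) ℤ)
    (i : A ⟶ B) (p : B ⟶ C) (i' : A ⟶ B') (p' : B' ⟶ C')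
    (β : B ⟶ B') (γ : C ⟶ C')
    (hcomm₁ : i ≫ β = i') (hcomm₂ : p ≫ γ = β ≫ p')
    (hmono : ∀ n : ℤ, Function.Injective (i.f n))
    (hepi : ∀ n : ℤ, Function.Surjective (p.f n))
    (hexact : ∀ n : ℤ, LinearMap.range (i.f n).hom = LinearMap.ker (p.f n).hom)
    (hmono' : ∀ n : ℤ, Function.Injective (i'.f n))
    (hepi' : ∀ n : ℤ, Function.Surjective (p'.f n))
    (hexact' : ∀ n : ℤ, LinearMap.range (i'.f n).hom = LinearMap.ker (p'.f n).hom)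
    (k : ℤ) :
    LinearMap.range (homologyMap (β ≫ p') k).hom
      = LinearMap.range (homologyMap p' k).hom ⊓ LinearMap.range (homologyMap γ k).hom := by
  -- the two short complexes of chain complexes
  have w : i ≫ p = 0 := by
    ext n x
    have hx : (i.f n) x ∈ LinearMap.ker (p.f n).hom := (hexact n) ▸ ⟨x, rfl⟩
    simpa using hx
  have w' : i' ≫ p' = 0 := by
    ext n x
    have hx : (i'.f n) x ∈ LinearMap.ker (p'.f n).hom := (hexact' n) ▸ ⟨x, rfl⟩
    simpa using hx
  set S : ShortComplex (ChainComplex (ModuleCat F) ℤ) := ShortComplex.mk i p w with hS_def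
  set S' : ShortComplex (ChainComplex (ModuleCat F) ℤ) := ShortComplex.mk i' p' w' with hS'_def
  have hS : S.ShortExact := by
    rw [shortExact_iff_degreewise_shortExact]
    intro n
    exact
      { exact := (ShortComplex.moduleCat_exact_iff_range_eq_ker _).2 (hexact n)
        mono_f := (ModuleCat.mono_iff_injective _).2 (hmono n)
        epi_g := (ModuleCat.epi_iff_surjective _).2 (hepi n) }
  have hS' : S'.ShortExact := by
    rw [shortExact_iff_degreewise_shortExact]
    intro n
    exact
      { exact := (ShortComplex.moduleCat_exact_iff_range_eq_ker _).2 (hexact' n)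
        mono_f := (ModuleCat.mono_iff_injective _).2 (hmono' n)
        epi_g := (ModuleCat.epi_iff_surjective _).2 (hepi' n) }
  have hij : (ComplexShape.down ℤ).Rel k (k - 1) := by
    simp [ChainComplex.prev]
  -- naturality of the connecting homomorphism
  have hδnat : hS.δ k (k - 1) hij ≫ homologyMap (𝟙 A) (k - 1)
      = homologyMap γ k ≫ hS'.δ k (k - 1) hij :=
    HomologySequence.δ_naturality
      ⟨𝟙 A, β, γ, by rw [Category.id_comp]; exact hcomm₁.symm, hcomm₂.symm⟩ hS hS' k (k - 1) hij
  have hcomp : homologyMap (β ≫ p') k = homologyMap (p ≫ γ) k := by rw [hcomm₂]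
  apply le_antisymm
  · rintro x ⟨b, rfl⟩
    constructor
    · exact ⟨homologyMap β k b, by rw [homologyMap_comp]; rfl⟩
    · exact ⟨homologyMap p k b, by rw [hcomp, homologyMap_comp]; rfl⟩
  · rintro x ⟨⟨b', hb'⟩, ⟨c, hc⟩⟩
    -- δ' x = 0 since x comes from H(B')
    have hδ'x : hS'.δ k (k - 1) hij x = 0 := by
      rw [← hb']
      exact DFunLike.congr_fun (congrArg ModuleCat.Hom.hom (hS'.comp_δ k (k - 1) hij)) b'
    -- hence δ c = 0 by naturality (the vertical map on A is the identity)
    have hδc : hS.δ k (k - 1) hij c = 0 := by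
      have h1 : homologyMap (𝟙 A) (k - 1) (hS.δ k (k - 1) hij c)
          = hS'.δ k (k - 1) hij (homologyMap γ k c) := DFunLike.congr_fun (congrArg ModuleCat.Hom.hom hδnat) c
      rw [homologyMap_id] at h1
      simpa [hc, hδ'x] using h1
    -- so c lifts to H(B) by exactness of the first long exact sequence at H(C)
    have hex := (hS.homology_exact₃ k (k - 1) hij).moduleCat_range_eq_ker
    obtain ⟨b, hb⟩ := hex.ge hδc
    refine ⟨b, ?_⟩
    rw [hcomp, homologyMap_comp]
    show homologyMap γ k (homologyMap p k b) = x
    rw [show homologyMap p k b = c from hb, hc]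
end

section
/- For any c ∈ ℝ and ℓ₁, ℓ₂ ∈ (0, ∞], the set R(c; ℓ₁, ℓ₂) = [c − ℓ₁, c) × [c, c + ℓ₂) (with the corresponding half-infinite conventions when ℓᵢ = ∞) is an interval in the poset ℝ × ℝ with the product order, but it is not a block. -/
open scoped ENNReal

/-- The rectangle `[c₁ − ℓ₁, c₁) × [c₂, c₂ + ℓ₂)` in `ℝ²`, where `ℓ₁, ℓ₂ ∈ (0,∞]`
(the conditions `c₁ − ℓ₁ ≤ p₁` and `p₂ < c₂ + ℓ₂` are phrased via `ENNReal`,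
so that `ℓᵢ = ∞` gives the half-infinite conventions). -/
def Rect2 (c₁ c₂ : ℝ) (l₁ l₂ : ℝ≥0∞) : Set (ℝ × ℝ) :=
  {p | ENNReal.ofReal (c₁ - p.1) ≤ l₁ ∧ p.1 < c₁ ∧
       c₂ ≤ p.2 ∧ ENNReal.ofReal (p.2 - c₂) < l₂}

/-- The rectangle `R(c; ℓ₁, ℓ₂) = [c − ℓ₁, c) × [c, c + ℓ₂)` with bottom-right corner
on the diagonal. -/
def Rect (c : ℝ) (l₁ l₂ : ℝ≥0∞) : Set (ℝ × ℝ) := Rect2 c c l₁ l₂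

lemma Rect2_convex (c₁ c₂ : ℝ) (l₁ l₂ : ℝ≥0∞) :
    ∀ ⦃x y z : ℝ × ℝ⦄, x ∈ Rect2 c₁ c₂ l₁ l₂ → y ∈ Rect2 c₁ c₂ l₁ l₂ →
      x ≤ z → z ≤ y → z ∈ Rect2 c₁ c₂ l₁ l₂ := by
  intro x y z hx hy hxz hzy
  obtain ⟨hx1, hx2, hx3, hx4⟩ := hx
  obtain ⟨hy1, hy2, hy3, hy4⟩ := hy
  refine ⟨le_trans (ENNReal.ofReal_le_ofReal (by linarith [hxz.1])) hx1,
    lt_of_le_of_lt hzy.1 hy2,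
    le_trans hx3 hxz.2,
    lt_of_le_of_lt (ENNReal.ofReal_le_ofReal (by linarith [hzy.2])) hy4⟩

/-- An interval in a poset: a nonempty, convex, zigzag-connected subset. -/
def IsIntervalSet {P : Type*} [Preorder P] (I : Set P) : Prop :=
  I.Nonempty ∧
  (∀ ⦃x y z : P⦄, x ∈ I → y ∈ I → x ≤ z → z ≤ y → z ∈ I) ∧
  (∀ x ∈ I, ∀ y ∈ I,
    Relation.ReflTransGen (fun a b : P => a ∈ I ∧ b ∈ I ∧ (a ≤ b ∨ b ≤ a)) x y)

/-- A downset in a totally ordered set. -/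
def IsDownset {T : Type*} [Preorder T] (D : Set T) : Prop :=
  ∀ ⦃x⦄, x ∈ D → ∀ ⦃y⦄, y ≤ x → y ∈ D

/-- An upset in a totally ordered set. -/
def IsUpset {T : Type*} [Preorder T] (U : Set T) : Prop :=
  ∀ ⦃x⦄, x ∈ U → ∀ ⦃y⦄, x ≤ y → y ∈ U

/-- A block in a product of two totally ordered sets: an interval of the form
`D₁ × D₂` (downsets), `U₁ × U₂` (upsets), `I₁ × T₂`, or `T₁ × I₂` (intervals). -/
def IsBlock {T₁ T₂ : Type*} [Preorder T₁] [Preorder T₂] (B : Set (T₁ × T₂)) : Prop :=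
  IsIntervalSet B ∧
  ((∃ D₁ D₂, IsDownset D₁ ∧ IsDownset D₂ ∧ B = D₁ ×ˢ D₂) ∨
   (∃ U₁ U₂, IsUpset U₁ ∧ IsUpset U₂ ∧ B = U₁ ×ˢ U₂) ∨
   (∃ I₁ : Set T₁, IsIntervalSet I₁ ∧ B = I₁ ×ˢ (Set.univ : Set T₂)) ∨
   (∃ I₂ : Set T₂, IsIntervalSet I₂ ∧ B = (Set.univ : Set T₁) ×ˢ I₂))

/-- For any `c ∈ ℝ` and `ℓ₁, ℓ₂ ∈ (0,∞]`, the rectangle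
`R(c; ℓ₁, ℓ₂) = [c − ℓ₁, c) × [c, c + ℓ₂)` is an interval in the poset `ℝ × ℝ`
with the product order, but it is not a block. -/
theorem rect_isInterval_not_isBlock (c : ℝ) (l₁ l₂ : ℝ≥0∞)
    (h₁ : 0 < l₁) (h₂ : 0 < l₂) :
    IsIntervalSet (Rect c l₁ l₂) ∧ ¬ IsBlock (Rect c l₁ l₂) := by
  -- a base point of the rectangle
  set p1 : ℝ := if l₁ = ⊤ then c - 1 else c - l₁.toReal with hp1
  have hp1lt : p1 < c := by
    rw [hp1]; split
    · linarith
    · have : 0 < l₁.toReal := ENNReal.toReal_pos h₁.ne' (by assumption)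
      linarith
  have hp1le : ENNReal.ofReal (c - p1) ≤ l₁ := by
    rw [hp1]; split
    · simp [*]
    · have : c - (c - l₁.toReal) = l₁.toReal := by ring
      rw [this, ENNReal.ofReal_toReal (by assumption)]
  have hbase : (p1, c) ∈ Rect c l₁ l₂ := by
    refine ⟨hp1le, hp1lt, le_refl c, ?_⟩
    simpa using h₂
  have hconv := Rect2_convex c c l₁ l₂
  have hint : IsIntervalSet (Rect c l₁ l₂) := by
    refine ⟨⟨(p1, c), hbase⟩, hconv, ?_⟩
    intro x hx y hy
    have hw : (max x.1 y.1, max x.2 y.2) ∈ Rect c l₁ l₂ := by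
      obtain ⟨hx1, hx2, hx3, hx4⟩ := hx
      obtain ⟨hy1, hy2, hy3, hy4⟩ := hy
      refine ⟨le_trans (ENNReal.ofReal_le_ofReal (by have := le_max_left x.1 y.1; linarith)) hx1,
        max_lt hx2 hy2, le_trans hx3 (le_max_left _ _), ?_⟩
      rcases max_cases x.2 y.2 with ⟨h, _⟩ | ⟨h, _⟩ <;> rw [h]
      · exact hx4
      · exact hy4
    have hxw : x ≤ (max x.1 y.1, max x.2 y.2) :=
      ⟨le_max_left _ _, le_max_left _ _⟩
    have hyw : y ≤ (max x.1 y.1, max x.2 y.2) :=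
      ⟨le_max_right _ _, le_max_right _ _⟩
    exact Relation.ReflTransGen.trans
      (Relation.ReflTransGen.single ⟨hx, hw, Or.inl hxw⟩)
      (Relation.ReflTransGen.single ⟨hw, hy, Or.inr hyw⟩)
  refine ⟨hint, ?_⟩
  rintro ⟨-, hD | hU | hI₁ | hI₂⟩
  · obtain ⟨D₁, D₂, hD₁, hD₂, hEq⟩ := hD
    have hb : (p1, c) ∈ D₁ ×ˢ D₂ := hEq ▸ hbase
    have : (p1, c - 1) ∈ D₁ ×ˢ D₂ :=
      ⟨hb.1, hD₂ hb.2 (show c - 1 ≤ c by linarith)⟩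
    have : (p1, c - 1) ∈ Rect c l₁ l₂ := hEq ▸ this
    have h := this.2.2.1
    simp only [] at h
    linarith
  · obtain ⟨U₁, U₂, hU₁, hU₂, hEq⟩ := hU
    have hb : (p1, c) ∈ U₁ ×ˢ U₂ := hEq ▸ hbase
    have : (c, c) ∈ U₁ ×ˢ U₂ := ⟨hU₁ hb.1 hp1lt.le, hb.2⟩
    have : (c, c) ∈ Rect c l₁ l₂ := hEq ▸ this
    exact lt_irrefl c this.2.1
  · obtain ⟨I₁, _, hEq⟩ := hI₁
    have hb : (p1, c) ∈ I₁ ×ˢ (Set.univ : Set ℝ) := hEq ▸ hbase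
    have : (p1, c - 1) ∈ I₁ ×ˢ (Set.univ : Set ℝ) := ⟨hb.1, trivial⟩
    have : (p1, c - 1) ∈ Rect c l₁ l₂ := hEq ▸ this
    have h := this.2.2.1
    simp only [] at h
    linarith
  · obtain ⟨I₂, _, hEq⟩ := hI₂
    have hb : (p1, c) ∈ (Set.univ : Set ℝ) ×ˢ I₂ := hEq ▸ hbase
    have : (c, c) ∈ (Set.univ : Set ℝ) ×ˢ I₂ := ⟨trivial, hb.2⟩
    have : (c, c) ∈ Rect c l₁ l₂ := hEq ▸ this
    exact lt_irrefl c this.2.1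
end

section
/- Let R = [c₁ − ℓ₁, c₁) × [c₂, c₂ + ℓ₂) be a rectangle in ℝ² with c₁ < c₂, contained in Ū = {(a,b) : a ≤ b}. Then the restriction of the interval module F_R to Ū is not middle-exact: there exists ε > 0 and points (c₁−ε, c₂−ε) ≤ (c₁±ε, c₂±ε) in Ū for which the sequence (F_R)_{(c₁−ε,c₂−ε)} → (F_R)_{(c₁−ε,c₂+ε)} ⊕ (F_R)_{(c₁+ε,c₂−ε)} → (F_R)_{(c₁+ε,c₂+ε)} fails to be exact at the middle term. -/
open Classical in
/-- The interval module `F_I` of a convex set `I` in a poset `P`: it assigns `K` to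
points of `I` and `0` elsewhere, with identity maps inside `I` and zero maps
otherwise. -/
noncomputable def intervalModule (K : Type*) [Field K] {P : Type*} [Preorder P]
    (I : Set P)
    (hconv : ∀ ⦃x y z : P⦄, x ∈ I → y ∈ I → x ≤ z → z ≤ y → z ∈ I) :
    PersMod P K where
  V p := ↥(if p ∈ I then (⊤ : Submodule K K) else ⊥)
  acg p := inferInstance
  mod p := inferInstance
  map {p q} _ :=
    { toFun := fun x => ⟨if p ∈ I ∧ q ∈ I then (x : K) else 0, by
        by_cases hq : q ∈ I
        · simp [hq]
        · have : ¬ (p ∈ I ∧ q ∈ I) := fun h => hq h.2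
          rw [if_neg this, if_neg hq]; exact Submodule.zero_mem _⟩
      map_add' := by
        intro x y
        apply Subtype.ext
        by_cases h' : p ∈ I ∧ q ∈ I <;> simp [h']
      map_smul' := by
        intro c x
        apply Subtype.ext
        by_cases h' : p ∈ I ∧ q ∈ I <;> simp [h'] }
  map_id := by
    intro p
    apply LinearMap.ext
    intro x
    apply Subtype.ext
    by_cases hp : p ∈ I
    · simp [hp]
    · have hx : (x : K) = 0 := by
        have := x.2
        exact (Submodule.mem_bot K).mp
          (Eq.mp (congrArg (fun S : Submodule K K => (x : K) ∈ S) (if_neg hp)) this)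
      show (if p ∈ I ∧ p ∈ I then (x : K) else 0) = (x : K)
      rw [if_neg (fun h => hp h.1), hx]
  map_comp := by
    intro p q r hpq hqr
    apply LinearMap.ext
    intro x
    apply Subtype.ext
    by_cases hp : p ∈ I
    · by_cases hr : r ∈ I
      · have hq : q ∈ I := hconv hp hr hpq hqr
        simp [hp, hq, hr]
      · have : ¬ (p ∈ I ∧ r ∈ I) := fun h => hr h.2
        simp [hr, this]
    · have hx : (x : K) = 0 := by
        have := x.2
        exact (Submodule.mem_bot K).mp
          (Eq.mp (congrArg (fun S : Submodule K K => (x : K) ∈ S) (if_neg hp)) this)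
      have h1 : ¬ (p ∈ I ∧ r ∈ I) := fun h => hp h.1
      have h2 : ¬ (p ∈ I ∧ q ∈ I) := fun h => hp h.1
      simp [h1, h2, hx]

/-- Direct sum (pointwise) of two persistence modules. -/
noncomputable def sumPers {P : Type*} [Preorder P] {K : Type*} [Field K]
    (M N : PersMod P K) : PersMod P K where
  V p := M.V p × N.V p
  acg p := inferInstance
  mod p := inferInstance
  map h := (M.map h).prodMap (N.map h)
  map_id := by
    intro p
    refine LinearMap.ext fun x => ?_
    show ((M.map (le_refl p)).prodMap (N.map (le_refl p))) x = x
    rw [M.map_id, N.map_id]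
    rfl
  map_comp := by
    intro p q r hpq hqr
    refine LinearMap.ext fun x => ?_
    show ((M.map (hpq.trans hqr)).prodMap (N.map (hpq.trans hqr))) x
        = ((M.map hqr).prodMap (N.map hqr)) (((M.map hpq).prodMap (N.map hpq)) x)
    rw [M.map_comp hpq hqr, N.map_comp hpq hqr]
    rfl

/-- An isomorphism of persistence modules: a pointwise linear equivalence commuting
with the structure maps. -/
structure PersModIso {P : Type*} [Preorder P] {K : Type*} [Field K]
    (M N : PersMod P K) where
  e : ∀ p : P, M.V p ≃ₗ[K] N.V p
  comm : ∀ {p q : P} (h : p ≤ q) (x : M.V p), e q (M.map h x) = N.map h (e p x)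

open scoped ENNReal

/-- Exactness of a persistence module at the middle of the square
`p ≤ q, r ≤ s`: the image of `(M.map hpq, M.map hpr)` equals the kernel of the
difference of `M.map hqs` and `M.map hrs`. -/
def ExactSquare {P K : Type*} [Preorder P] [Field K] (M : PersMod P K)
    (p q r s : P) (hpq : p ≤ q) (hpr : p ≤ r) (hqs : q ≤ s) (hrs : r ≤ s) : Prop :=
  (∀ w : M.V p, M.map hqs (M.map hpq w) = M.map hrs (M.map hpr w)) ∧
  (∀ (x : M.V q) (y : M.V r), M.map hqs x = M.map hrs y →
    ∃ w : M.V p, M.map hpq w = x ∧ M.map hpr w = y)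

/-- The sub-poset `Ū = {(a,b) ∈ ℝ² : a ≤ b}`. -/
abbrev Ubar : Type := {p : ℝ × ℝ // p.1 ≤ p.2}

lemma rect2_preimage_convex (c₁ c₂ : ℝ) (l₁ l₂ : ℝ≥0∞) :
    ∀ ⦃x y z : Ubar⦄, x ∈ Subtype.val ⁻¹' Rect2 c₁ c₂ l₁ l₂ →
      y ∈ Subtype.val ⁻¹' Rect2 c₁ c₂ l₁ l₂ → x ≤ z → z ≤ y →
      z ∈ Subtype.val ⁻¹' Rect2 c₁ c₂ l₁ l₂ :=
  fun _ _ _ hx hy hxz hzy => Rect2_convex c₁ c₂ l₁ l₂ hx hy hxz hzy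

/-- Let `R = [c₁ − ℓ₁, c₁) × [c₂, c₂ + ℓ₂)` be a rectangle in `ℝ²` with `c₁ < c₂`,
contained in `Ū = {(a,b) : a ≤ b}`.  Then the restriction of the interval module
`F_R` to `Ū` is not middle-exact: for some `ε > 0` the middle-exactness sequence at
the square with corners `(c₁ ± ε, c₂ ± ε)` fails to be exact. -/
theorem intervalModule_restrict_not_middleExact (K : Type*) [Field K]
    (c₁ c₂ : ℝ) (l₁ l₂ : ℝ≥0∞) (h₁ : 0 < l₁) (h₂ : 0 < l₂) (hcc : c₁ < c₂)
    (hsub : Rect2 c₁ c₂ l₁ l₂ ⊆ {p : ℝ × ℝ | p.1 ≤ p.2}) :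
    ∃ ε : ℝ, 0 < ε ∧ ∃ p q r s : Ubar,
      p.1 = (c₁ - ε, c₂ - ε) ∧ q.1 = (c₁ - ε, c₂ + ε) ∧
      r.1 = (c₁ + ε, c₂ - ε) ∧ s.1 = (c₁ + ε, c₂ + ε) ∧
      ∃ (hpq : p ≤ q) (hpr : p ≤ r) (hqs : q ≤ s) (hrs : r ≤ s),
        ¬ ExactSquare
            (intervalModule K (Subtype.val ⁻¹' Rect2 c₁ c₂ l₁ l₂)
              (rect2_preimage_convex c₁ c₂ l₁ l₂))
            p q r s hpq hpr hqs hrs := by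
  classical
  -- choose ε
  set d₁ : ℝ≥0∞ := min 1 l₁ with hd₁
  set d₂ : ℝ≥0∞ := min 1 l₂ with hd₂
  have hd₁0 : d₁ ≠ 0 := (lt_min zero_lt_one h₁).ne'
  have hd₂0 : d₂ ≠ 0 := (lt_min zero_lt_one h₂).ne'
  have hd₁t : d₁ ≠ ⊤ := ne_top_of_le_ne_top ENNReal.one_ne_top (min_le_left _ _)
  have hd₂t : d₂ ≠ ⊤ := ne_top_of_le_ne_top ENNReal.one_ne_top (min_le_left _ _)
  have hd₁pos : 0 < d₁.toReal := ENNReal.toReal_pos hd₁0 hd₁t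
  have hd₂pos : 0 < d₂.toReal := ENNReal.toReal_pos hd₂0 hd₂t
  set ε : ℝ := min ((c₂ - c₁)/2) (min d₁.toReal (d₂.toReal/2)) with hεdef
  have hε : 0 < ε := lt_min (by linarith) (lt_min hd₁pos (by linarith))
  have hε1 : ε ≤ (c₂ - c₁)/2 := min_le_left _ _
  have hεd₁ : ε ≤ d₁.toReal := le_trans (min_le_right _ _) (min_le_left _ _)
  have hεd₂ : ε ≤ d₂.toReal/2 := le_trans (min_le_right _ _) (min_le_right _ _)
  refine ⟨ε, hε, ⟨(c₁ - ε, c₂ - ε), by simp; try linarith⟩,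
    ⟨(c₁ - ε, c₂ + ε), by simp; try linarith⟩,
    ⟨(c₁ + ε, c₂ - ε), by simp; try linarith⟩,
    ⟨(c₁ + ε, c₂ + ε), by simp; try linarith⟩, rfl, rfl, rfl, rfl, ?_, ?_, ?_, ?_, ?_⟩
  · exact Subtype.mk_le_mk.mpr ⟨le_refl _, by simp; try linarith⟩
  · exact Subtype.mk_le_mk.mpr ⟨by simp; try linarith, le_refl _⟩
  · exact Subtype.mk_le_mk.mpr ⟨by simp; try linarith, le_refl _⟩
  · exact Subtype.mk_le_mk.mpr ⟨le_refl _, by simp; try linarith⟩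
  set I : Set Ubar := Subtype.val ⁻¹' Rect2 c₁ c₂ l₁ l₂ with hI
  set M := intervalModule K I (rect2_preimage_convex c₁ c₂ l₁ l₂) with hM
  have hεl₁ : ENNReal.ofReal ε ≤ l₁ := by
    calc ENNReal.ofReal ε ≤ ENNReal.ofReal d₁.toReal := ENNReal.ofReal_le_ofReal hεd₁
    _ = d₁ := ENNReal.ofReal_toReal hd₁t
    _ ≤ l₁ := min_le_right _ _
  have hεl₂ : ENNReal.ofReal ε < l₂ := by
    calc ENNReal.ofReal ε ≤ ENNReal.ofReal (d₂.toReal/2) := ENNReal.ofReal_le_ofReal hεd₂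
    _ < ENNReal.ofReal d₂.toReal := by
        apply ENNReal.ofReal_lt_ofReal_iff_of_nonneg (by linarith) |>.mpr; linarith
    _ = d₂ := ENNReal.ofReal_toReal hd₂t
    _ ≤ l₂ := min_le_right _ _
  have hq : (⟨(c₁ - ε, c₂ + ε), by simp; try linarith⟩ : Ubar) ∈ I := by
    refine ⟨?_, by simp; try linarith, by simp; try linarith, ?_⟩
    · simpa using hεl₁
    · simpa using hεl₂
  have hp : (⟨(c₁ - ε, c₂ - ε), by simp; try linarith⟩ : Ubar) ∉ I := by
    intro h; exact absurd h.2.2.1 (by simp; try linarith)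
  have hs : (⟨(c₁ + ε, c₂ + ε), by simp; try linarith⟩ : Ubar) ∉ I := by
    intro h; exact absurd h.2.1 (by simp; try linarith)
  rintro ⟨-, hsurj⟩
  set pq : Ubar := ⟨(c₁ - ε, c₂ - ε), by simp; try linarith⟩ with hpq'
  set qq : Ubar := ⟨(c₁ - ε, c₂ + ε), by simp; try linarith⟩ with hqq'
  set rq : Ubar := ⟨(c₁ + ε, c₂ - ε), by simp; try linarith⟩ with hrq'
  set sq : Ubar := ⟨(c₁ + ε, c₂ + ε), by simp; try linarith⟩ with hsq'
  set x : M.V qq := ⟨(1:K), by simp [hM, intervalModule, hq]⟩ with hx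
  have heq : M.map (show qq ≤ sq from Subtype.mk_le_mk.mpr ⟨by simp; try linarith, le_refl _⟩) x
      = M.map (show rq ≤ sq from Subtype.mk_le_mk.mpr ⟨le_refl _, by simp; try linarith⟩)
        (0 : M.V rq) := by
    apply Subtype.ext
    have h1 : ¬ (qq ∈ I ∧ sq ∈ I) := fun h => hs h.2
    have h2 : ¬ (rq ∈ I ∧ sq ∈ I) := fun h => hs h.2
    show (if qq ∈ I ∧ sq ∈ I then (Subtype.val x) else 0)
        = (if rq ∈ I ∧ sq ∈ I then (Subtype.val (0 : M.V rq)) else 0)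
    rw [if_neg h1, if_neg h2]
  obtain ⟨w, hw1, -⟩ := hsurj x 0 heq
  have h2 : ¬ (pq ∈ I ∧ qq ∈ I) := fun h => hp h.1
  have h0 : Subtype.val x = 0 := by
    rw [← hw1]
    show (if pq ∈ I ∧ qq ∈ I then (Subtype.val w) else 0) = 0
    exact if_neg h2
  rw [hx] at h0
  exact one_ne_zero h0
end
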